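/- With ξ defined from a strongly normalized 3-cocycle c, for every idempotent e ∈ E(T) and word w ∈ F(T ⊔ T⁻¹), one has ξ_e(w) = θ(e · r(φ(w))), and for every t ∈ T, θ(e)·ξ_t(w) = ξ_{et}(w). -/

import Mathlib

/-!
Every clause of the recursion for `ξ` multiplies by a coefficient `c(t, x, y)^{±1}` without
changing the value `φ` of the word. On an idempotent `e` such a coefficient is `θ(r(e x y))` by
strong normalization, and `c(e t, x, y) = θ(e) c(t, x, y)` because `c` preserves the natural order.
Both properties survive products, since the domain idempotent `r(e x)` of the head letter lies
above `r(e φ(w))`; induction on the word then gives both identities for `ξ`.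
-/

/-- An inverse semigroup: every element `s` has a (unique) inverse `s⁻¹`
with `s * s⁻¹ * s = s` and `s⁻¹ * s * s⁻¹ = s⁻¹`. -/
class InverseSemigroup (S : Type*) extends Semigroup S, Inv S where
  mul_inv_mul : ∀ s : S, s * s⁻¹ * s = s
  inv_mul_inv : ∀ s : S, s⁻¹ * s * s⁻¹ = s⁻¹
  inv_unique : ∀ s t : S, s * t * s = s → t * s * t = t → t = s⁻¹

namespace InverseSemigroup

/-- The set of idempotents of a multiplicative structure. -/
def E (S : Type*) [Mul S] : Set S := {e | e * e = e}

/-- The natural partial order: `s ≤ t` iff `s = s * s⁻¹ * t`. -/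
def nle {S : Type*} [Mul S] [Inv S] (s t : S) : Prop := s = s * s⁻¹ * t

/-- `r s = s * s⁻¹`. -/
def r {S : Type*} [Mul S] [Inv S] (s : S) : S := s * s⁻¹

/-- A Clifford semigroup (semilattice of groups): idempotents are central. -/
def IsClifford (S : Type*) [Mul S] : Prop := ∀ e ∈ E S, ∀ s : S, e * s = s * e

end InverseSemigroup

open InverseSemigroup

/-- The value in `T` of the letter `(x, true) = [x]` or `(x, false) = [x]⁻¹`. -/
def letterVal {T : Type*} [InverseSemigroup T] (p : T × Bool) : T :=
  if p.2 then p.1 else p.1⁻¹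

/-- The evaluation `φ` in `T` of a nonempty word `p :: l` over `T ⊔ T⁻¹`. -/
def wordVal {T : Type*} [InverseSemigroup T] (p : T × Bool) (l : List (T × Bool)) : T :=
  l.foldl (fun acc q => acc * letterVal q) (letterVal p)

namespace InverseSemigroup

variable {S : Type*} [InverseSemigroup S] {e f : S}

lemma inv_inv' (s : S) : s⁻¹⁻¹ = s :=
  (inv_unique s⁻¹ s (inv_mul_inv s) (mul_inv_mul s)).symm

lemma inv_mul_inv_mul (s x : S) : s⁻¹ * (s * (s⁻¹ * x)) = s⁻¹ * x := by
  rw [← mul_assoc, ← mul_assoc, inv_mul_inv]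

lemma inv_eq_self_of_mem_E (he : e ∈ E S) : e⁻¹ = e :=
  (inv_unique e e (by rw [he, he]) (by rw [he, he])).symm

lemma r_mem_E (s : S) : r s ∈ E S := by
  change s * s⁻¹ * (s * s⁻¹) = s * s⁻¹
  rw [← mul_assoc, mul_inv_mul]

lemma inv_mul_mem_E (s : S) : s⁻¹ * s ∈ E S := by
  simpa only [r, inv_inv'] using r_mem_E s⁻¹

-- `f (e f)⁻¹ e` is an inverse of `e f`, hence equal to `(e f)⁻¹`;
-- this forces `(e f)⁻¹` to be idempotent.
lemma mul_mem_E (he : e ∈ E S) (hf : f ∈ E S) : e * f ∈ E S := by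
  set x := (e * f)⁻¹
  have he' : ∀ y, e * (e * y) = e * y := fun y => by rw [← mul_assoc, he]
  have hf' : ∀ y, f * (f * y) = f * y := fun y => by rw [← mul_assoc, hf]
  have h1 : e * (f * (x * (e * f))) = e * f := by
    simpa only [mul_assoc] using mul_inv_mul (e * f)
  have h2 : ∀ y, x * (e * (f * (x * y))) = x * y := fun y => by
    simpa only [mul_assoc] using congrArg (· * y) (inv_mul_inv (e * f))
  have hx : f * x * e = x := inv_unique (e * f) (f * x * e)
    (by simpa only [mul_assoc, he', hf'] using h1)
    (by simp only [mul_assoc, he', hf', h2])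
  have hxx : x * x = x := by
    conv_lhs => rw [← hx]
    simp only [mul_assoc, h2]
    simp only [← mul_assoc, hx]
  change e * f * (e * f) = e * f
  rw [← inv_inv' (e * f), inv_eq_self_of_mem_E hxx, hxx]

lemma mul_comm_of_mem_E (he : e ∈ E S) (hf : f ∈ E S) : e * f = f * e := by
  have he' : ∀ y, e * (e * y) = e * y := fun y => by rw [← mul_assoc, he]
  have hf' : ∀ y, f * (f * y) = f * y := fun y => by rw [← mul_assoc, hf]
  have hef : e * (f * (e * f)) = e * f := by
    have h : e * f * (e * f) = e * f := mul_mem_E he hf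
    simpa only [mul_assoc] using h
  have hfe : f * (e * (f * e)) = f * e := by
    have h : f * e * (f * e) = f * e := mul_mem_E hf he
    simpa only [mul_assoc] using h
  rw [← inv_eq_self_of_mem_E (mul_mem_E he hf)]
  exact (inv_unique _ _ (by simp only [mul_assoc, he', hf', hef])
    (by simp only [mul_assoc, he', hf', hfe])).symm

lemma mul_inv_rev' (a b : S) : (a * b)⁻¹ = b⁻¹ * a⁻¹ := by
  have hc := mul_comm_of_mem_E (r_mem_E b) (inv_mul_mem_E a)
  unfold r at hc
  refine (inv_unique _ _ ?_ ?_).symm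
  · calc a * b * (b⁻¹ * a⁻¹) * (a * b) = a * (b * b⁻¹ * (a⁻¹ * a)) * b := by
          simp only [mul_assoc]
      _ = (a * a⁻¹ * a) * (b * b⁻¹ * b) := by rw [hc]; simp only [mul_assoc]
      _ = a * b := by rw [mul_inv_mul, mul_inv_mul]
  · calc b⁻¹ * a⁻¹ * (a * b) * (b⁻¹ * a⁻¹)
          = b⁻¹ * (a⁻¹ * a * (b * b⁻¹)) * a⁻¹ := by simp only [mul_assoc]
      _ = (b⁻¹ * b * b⁻¹) * (a⁻¹ * a * a⁻¹) := by rw [← hc]; simp only [mul_assoc]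
      _ = b⁻¹ * a⁻¹ := by rw [inv_mul_inv, inv_mul_inv]

lemma r_mul_of_mem_E (he : e ∈ E S) (s : S) : r (e * s) = e * r s := by
  calc r (e * s) = e * (r s * e) := by
        simp only [r, mul_inv_rev', inv_eq_self_of_mem_E he, mul_assoc]
    _ = e * r s := by rw [mul_comm_of_mem_E (r_mem_E s) he, ← mul_assoc, he]

lemma r_mul_r_mul (s u : S) : r s * r (s * u) = r (s * u) := by
  simp only [r, mul_inv_rev', ← mul_assoc, mul_inv_mul]

lemma r_mul_inv_mul (s y : S) : r (s * y⁻¹ * y) = r (s * y⁻¹) := by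
  simp only [r, mul_inv_rev', inv_inv', mul_assoc, inv_mul_inv_mul]

lemma nle_refl (s : S) : nle s s := (mul_inv_mul s).symm

lemma mul_nle_of_mem_E (he : e ∈ E S) (s : S) : nle (e * s) s := by
  rw [nle, ← r, r_mul_of_mem_E he, r, mul_assoc, mul_assoc, ← mul_assoc s, mul_inv_mul]

end InverseSemigroup

lemma r_mul_r_mul_wordVal {T : Type*} [InverseSemigroup T] (t x : T) (l : List (T × Bool)) :
    r (t * x) * r (t * wordVal (x, true) l) = r (t * wordVal (x, true) l) := by
  induction l generalizing x with
  | nil => exact r_mem_E (t * x)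
  | cons q l ih =>
    change r (t * x) * r (t * wordVal (x * letterVal q, true) l) =
      r (t * wordVal (x * letterVal q, true) l)
    rw [← ih, ← mul_assoc, ← mul_assoc t, r_mul_r_mul]

section IdempotentLaws

variable {T A : Type*} [InverseSemigroup T] [InverseSemigroup A]

/-- The shape shared by the coefficients `t ↦ c(t, x, y)^{±1}` and the maps `t ↦ ξ_t(w)`. -/
def IdempotentLaws (θ : T → A) (d : T → A) (a : T) : Prop :=
  (∀ e ∈ E T, d e = θ (r (e * a))) ∧ ∀ e ∈ E T, ∀ t, d (e * t) = θ e * d t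

variable {θ : T → A} {d d' : T → A} {a b : T}

lemma IdempotentLaws.of_r_eq (hd : IdempotentLaws θ d b)
    (hab : ∀ e ∈ E T, r (e * b) = r (e * a)) : IdempotentLaws θ d a :=
  ⟨fun e he => (hd.1 e he).trans (congrArg θ (hab e he)), hd.2⟩

lemma IdempotentLaws.inv (hA : ∀ u v : A, u * v = v * u) (hθE : ∀ e ∈ E T, θ e ∈ E A)
    (hd : IdempotentLaws θ d a) : IdempotentLaws θ (fun t => (d t)⁻¹) a := by
  refine ⟨fun e he => ?_, fun e he t => ?_⟩ <;> dsimp only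
  · rw [hd.1 e he, inv_eq_self_of_mem_E (hθE _ (r_mem_E _))]
  · rw [hd.2 e he t, mul_inv_rev', hA, inv_eq_self_of_mem_E (hθE e he)]

lemma IdempotentLaws.mul (hA : ∀ u v : A, u * v = v * u) (hθE : ∀ e ∈ E T, θ e ∈ E A)
    (hθmul : ∀ e ∈ E T, ∀ f ∈ E T, θ (e * f) = θ e * θ f)
    (hd : IdempotentLaws θ d a) (hd' : IdempotentLaws θ d' b)
    (hab : ∀ e ∈ E T, r (e * a) * r (e * b) = r (e * b)) :
    IdempotentLaws θ (fun t => d t * d' t) b := by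
  refine ⟨fun e he => ?_, fun e he t => ?_⟩ <;> dsimp only
  · rw [hd.1 e he, hd'.1 e he, ← hθmul _ (r_mem_E _) _ (r_mem_E _), hab e he]
  · have : Std.Commutative (α := A) (· * ·) := ⟨hA⟩
    calc d (e * t) * d' (e * t) = θ e * θ e * (d t * d' t) := by
          rw [hd.2 e he t, hd'.2 e he t]; ac_rfl
      _ = θ e * (d t * d' t) := by rw [hθE e he]

lemma idempotentLaws_cocycle (hθmul : ∀ e ∈ E T, ∀ f ∈ E T, θ (e * f) = θ e * θ f)
    {c : T → T → T → A} (hc : ∀ x y z : T, c x y z * (c x y z)⁻¹ = θ (r (x * y * z)))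
    (hop : ∀ x x' y y' z z' : T, nle x x' → nle y y' → nle z z' →
      nle (c x y z) (c x' y' z'))
    (hsn : ∀ x y z : T, (x ∈ E T ∨ y ∈ E T ∨ z ∈ E T) → c x y z = θ (r (x * y * z)))
    (x y : T) : IdempotentLaws θ (fun t => c t x y) (x * y) := by
  refine ⟨fun e he => by dsimp only; rw [hsn e x y (Or.inl he), mul_assoc], fun e he t => ?_⟩
  -- `c (e t) x y ≤ c t x y` in the natural order: `c (e t) x y = r (c (e t) x y) * c t x y`
  show c (e * t) x y = θ e * c t x y
  calc c (e * t) x y = θ (r (e * t * x * y)) * c t x y := by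
        rw [← hc]; exact hop _ _ _ _ _ _ (mul_nle_of_mem_E he t) (nle_refl x) (nle_refl y)
    _ = θ e * (c t x y * (c t x y)⁻¹ * c t x y) := by
        rw [hc, mul_assoc e, mul_assoc e, r_mul_of_mem_E he, hθmul e he _ (r_mem_E _),
          mul_assoc]
    _ = θ e * c t x y := by rw [mul_inv_mul]

end IdempotentLaws

section Xi

variable {T A : Type*} [InverseSemigroup T] [InverseSemigroup A] {θ : T → A}
  {c : T → T → T → A} {ξ : T → List (T × Bool) → A}

lemma idempotentLaws_xi_cons_true (hA : ∀ u v : A, u * v = v * u)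
    (hθE : ∀ e ∈ E T, θ e ∈ E A)
    (hθmul : ∀ e ∈ E T, ∀ f ∈ E T, θ (e * f) = θ e * θ f)
    (hcoeff : ∀ x y, IdempotentLaws θ (fun t => c t x y) (x * y))
    (hξ1 : ∀ t x : T, ξ t [(x, true)] = θ (r (t * x)))
    (hξ3 : ∀ t x y : T, ∀ v : List (T × Bool),
      ξ t ((x, true) :: (y, true) :: v) = c t x y * ξ t ((x * y, true) :: v))
    (hξ4 : ∀ t x y : T, ∀ v : List (T × Bool),
      ξ t ((x, true) :: (y, false) :: v) =
        (c t (x * y⁻¹) y)⁻¹ * ξ t ((x * y⁻¹, true) :: v))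
    (l : List (T × Bool)) (x : T) :
    IdempotentLaws θ (fun t => ξ t ((x, true) :: l)) (wordVal (x, true) l) := by
  induction l generalizing x with
  | nil =>
    refine ⟨fun e _ => hξ1 e x, fun e he t => ?_⟩
    dsimp only
    rw [hξ1, hξ1, mul_assoc, r_mul_of_mem_E he, hθmul e he _ (r_mem_E _)]
  | cons q v ih =>
    obtain ⟨y, _ | _⟩ := q
    · have hinv : IdempotentLaws θ (fun t => (c t (x * y⁻¹) y)⁻¹) (x * y⁻¹) :=
        ((hcoeff (x * y⁻¹) y).inv hA hθE).of_r_eq fun e _ => by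
          simpa only [mul_assoc] using r_mul_inv_mul (e * x) y
      rw [show (fun t => ξ t _) = _ from funext fun t => hξ4 t x y v]
      exact hinv.mul hA hθE hθmul (ih (x * y⁻¹)) fun e _ => r_mul_r_mul_wordVal e _ v
    · rw [show (fun t => ξ t _) = _ from funext fun t => hξ3 t x y v]
      exact (hcoeff x y).mul hA hθE hθmul (ih (x * y)) fun e _ => r_mul_r_mul_wordVal e _ v

end Xi

theorem xi_idempotent_general {T A : Type*} [InverseSemigroup T] [InverseSemigroup A]
    (θ : T → A)
    (hAcomm : ∀ a b : A, a * b = b * a)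
    (hθE : ∀ e ∈ E T, θ e ∈ E A)
    (hθmul : ∀ e ∈ E T, ∀ f ∈ E T, θ (e * f) = θ e * θ f)
    (c : T → T → T → A)
    (hc : ∀ x y z : T, c x y z * (c x y z)⁻¹ = θ (r (x * y * z)))
    (hop : ∀ x x' y y' z z' : T, nle x x' → nle y y' → nle z z' →
      nle (c x y z) (c x' y' z'))
    (hsn : ∀ x y z : T, (x ∈ E T ∨ y ∈ E T ∨ z ∈ E T) →
      c x y z = θ (r (x * y * z)))
    (ξ : T → List (T × Bool) → A)
    (hξ1 : ∀ t x : T, ξ t [(x, true)] = θ (r (t * x)))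
    (hξ2 : ∀ t x : T, ∀ u : List (T × Bool),
      ξ t ((x, false) :: u) = (c t x⁻¹ x)⁻¹ * ξ t ((x⁻¹, true) :: u))
    (hξ3 : ∀ t x y : T, ∀ v : List (T × Bool),
      ξ t ((x, true) :: (y, true) :: v) = c t x y * ξ t ((x * y, true) :: v))
    (hξ4 : ∀ t x y : T, ∀ v : List (T × Bool),
      ξ t ((x, true) :: (y, false) :: v) =
        (c t (x * y⁻¹) y)⁻¹ * ξ t ((x * y⁻¹, true) :: v))
    : ∀ e ∈ E T, ∀ p : T × Bool, ∀ l : List (T × Bool),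
      ξ e (p :: l) = θ (e * r (wordVal p l)) ∧
      (∀ t : T, θ e * ξ t (p :: l) = ξ (e * t) (p :: l)) := by
  have hcoeff := idempotentLaws_cocycle hθmul hc hop hsn
  have hpos := idempotentLaws_xi_cons_true hAcomm hθE hθmul hcoeff hξ1 hξ3 hξ4
  have hlaws : ∀ p l, IdempotentLaws θ (fun t => ξ t (p :: l)) (wordVal p l) := by
    rintro ⟨x, _ | _⟩ l
    · have hinv : IdempotentLaws θ (fun t => (c t x⁻¹ x)⁻¹) x⁻¹ :=
        ((hcoeff x⁻¹ x).inv hAcomm hθE).of_r_eq fun e _ => by rw [← mul_assoc, r_mul_inv_mul]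
      rw [show (fun t => ξ t _) = _ from funext fun t => hξ2 t x l]
      exact hinv.mul hAcomm hθE hθmul (hpos l x⁻¹) fun e _ => r_mul_r_mul_wordVal e _ l
    · exact hpos l x
  intro e he p l
  obtain ⟨hval, hlin⟩ := hlaws p l
  exact ⟨(hval e he).trans (by rw [r_mul_of_mem_E he]), fun t => (hlin e he t).symm⟩

/-- For an idempotent `e`, `ξ_e(w) = θ(e · r(φ(w)))`, and `θ(e) ξ_t(w) = ξ_{et}(w)`. -/
theorem xi_idempotent {T A : Type*} [InverseSemigroup T] [InverseSemigroup A]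
    (θ : T → A) (η : T → A → A)
    (hAcomm : ∀ a b : A, a * b = b * a)
    (hθE : ∀ e ∈ E T, θ e ∈ E A)
    (hθinj : ∀ e ∈ E T, ∀ f ∈ E T, θ e = θ f → e = f)
    (hθsurj : ∀ a ∈ E A, ∃ e ∈ E T, θ e = a)
    (hθmul : ∀ e ∈ E T, ∀ f ∈ E T, θ (e * f) = θ e * θ f)
    (hηhom : ∀ t u : T, ∀ a : A, η (t * u) a = η t (η u a))
    (hηmul : ∀ t : T, ∀ a b : A, η t (a * b) = η t a * η t b)
    (hη1 : ∀ e ∈ E T, ∀ a : A, η e a = θ e * a)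
    (hη2 : ∀ t : T, ∀ e ∈ E T, η t (θ e) = θ (t * e * t⁻¹))
    (c : T → T → T → A)
    (hc : ∀ x y z : T, c x y z * (c x y z)⁻¹ = θ (r (x * y * z)))
    (hcoc : ∀ x y z w : T,
      η x (c y z w) * c x y z * c x (y * z) w = c x y (z * w) * c (x * y) z w)
    (hop : ∀ x x' y y' z z' : T, nle x x' → nle y y' → nle z z' →
      nle (c x y z) (c x' y' z'))
    (hsn : ∀ x y z : T, (x ∈ E T ∨ y ∈ E T ∨ z ∈ E T) →
      c x y z = θ (r (x * y * z)))
    (ξ : T → List (T × Bool) → A)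
    (hξ1 : ∀ t x : T, ξ t [(x, true)] = θ (r (t * x)))
    (hξ2 : ∀ t x : T, ∀ u : List (T × Bool),
      ξ t ((x, false) :: u) = (c t x⁻¹ x)⁻¹ * ξ t ((x⁻¹, true) :: u))
    (hξ3 : ∀ t x y : T, ∀ v : List (T × Bool),
      ξ t ((x, true) :: (y, true) :: v) = c t x y * ξ t ((x * y, true) :: v))
    (hξ4 : ∀ t x y : T, ∀ v : List (T × Bool),
      ξ t ((x, true) :: (y, false) :: v) =
        (c t (x * y⁻¹) y)⁻¹ * ξ t ((x * y⁻¹, true) :: v))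
    : ∀ e ∈ E T, ∀ p : T × Bool, ∀ l : List (T × Bool),
      ξ e (p :: l) = θ (e * r (wordVal p l)) ∧
      (∀ t : T, θ e * ξ t (p :: l) = ξ (e * t) (p :: l)) :=
  xi_idempotent_general θ hAcomm hθE hθmul c hc hop hsn ξ hξ1 hξ2 hξ3 hξ4
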